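/- arXiv:2110.15510 — 2 statements merged into one kernel-verified Lean document; each statement's English description precedes it below -/
import Mathlib

section
/- For a real number r ≥ 0 and real θ, the Jacobi–Anger expansion holds: e^{i r cos θ} = J₀(r) + 2 ∑_{s=1}^∞ iˢ J_s(r) cos(sθ), where J_s denotes the Bessel function of the first kind of order s, and the series converges. -/
open Real

noncomputable def besselJ (s : ℕ) (t : ℝ) : ℝ :=
  ∑' m : ℕ, (-1 : ℝ) ^ m / ((Nat.factorial m) * Nat.factorial (m + s)) * (t / 2) ^ (2 * m + s)

private lemma besselJ_summable (s : ℕ) (t : ℝ) :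
    Summable (fun m : ℕ => (-1 : ℝ) ^ m / ((Nat.factorial m) * Nat.factorial (m + s)) *
      (t / 2) ^ (2 * m + s)) := by
  apply Summable.of_norm_bounded
    (g := fun m : ℕ => (|t| / 2) ^ s * (((t / 2) ^ 2) ^ m / Nat.factorial m))
    ((Real.summable_pow_div_factorial ((t / 2) ^ 2)).mul_left _)
  intro m
  have h1 : ‖(-1 : ℝ) ^ m / ((Nat.factorial m) * Nat.factorial (m + s)) *
      (t / 2) ^ (2 * m + s)‖ = |t / 2| ^ (2 * m + s) / ((Nat.factorial m) * Nat.factorial (m + s)) := by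
    rw [norm_mul, norm_div, norm_pow, norm_pow, norm_neg, norm_one, one_pow]
    rw [Real.norm_eq_abs, Real.norm_eq_abs, abs_of_nonneg (by positivity)]
    ring
  rw [h1]
  have h2 : |t / 2| ^ (2 * m + s) = ((t / 2) ^ 2) ^ m * (|t| / 2) ^ s := by
    rw [pow_add, pow_mul, sq_abs, abs_div]
    norm_num
  rw [h2]
  have hfm : (1 : ℝ) ≤ (Nat.factorial (m + s) : ℝ) := by
    exact_mod_cast Nat.one_le_iff_ne_zero.mpr (Nat.factorial_ne_zero _)
  have hm : (0 : ℝ) < (Nat.factorial m : ℝ) := by positivity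
  rw [div_le_iff₀ (by positivity)]
  have : ((t / 2) ^ 2) ^ m * (|t| / 2) ^ s * ((Nat.factorial m : ℝ)) ≤
      ((t / 2) ^ 2) ^ m * (|t| / 2) ^ s * ((Nat.factorial m : ℝ) * Nat.factorial (m + s)) := by
    apply mul_le_mul_of_nonneg_left _ (by positivity)
    nlinarith
  calc ((t / 2) ^ 2) ^ m * (|t| / 2) ^ s ≤
      (|t| / 2) ^ s * (((t / 2) ^ 2) ^ m / Nat.factorial m) * ((Nat.factorial m : ℝ) * Nat.factorial (m + s)) := by
        rw [mul_div_assoc']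
        rw [div_mul_eq_mul_div, le_div_iff₀ hm] at *
        nlinarith [pow_nonneg (sq_nonneg (t/2)) m, pow_nonneg (by positivity : (0:ℝ) ≤ |t|/2) s]
    _ = _ := by ring

private lemma exp_add_exp_neg (x : ℝ) :
    Complex.exp (Complex.I * x) + Complex.exp (-(Complex.I * x)) = 2 * (Real.cos x : ℂ) := by
  have h1 : Complex.I * (x : ℂ) = (x : ℂ) * Complex.I := by ring
  have h2 : -((x : ℂ) * Complex.I) = (-(x : ℂ)) * Complex.I := by ring
  rw [h1, h2, Complex.exp_mul_I, Complex.exp_mul_I, Complex.cos_neg, Complex.sin_neg,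
    ← Complex.ofReal_cos]
  ring

private lemma fiber_hasSum' (r : ℝ) (n : ℕ) (a b w : ℂ)
    (hab : a * b = -(((r : ℂ) / 2) ^ 2))
    (han : a ^ n = Complex.I ^ n * ((r : ℂ) / 2) ^ n * w) :
    HasSum (fun j : ℕ => a ^ (j + n) / (Nat.factorial (j + n)) * (b ^ j / (Nat.factorial j)))
      (Complex.I ^ n * (besselJ n r : ℂ) * w) := by
  have hJ : HasSum (fun m : ℕ => (((-1 : ℝ) ^ m / ((Nat.factorial m) * Nat.factorial (m + n)) *
      (r / 2) ^ (2 * m + n) : ℝ) : ℂ)) ((besselJ n r : ℂ)) :=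
    Complex.hasSum_ofReal.mpr (besselJ_summable n r).hasSum
  have hmul := hJ.mul_left (Complex.I ^ n * w)
  convert hmul using 1
  · rfl
  · funext j
    have key : a ^ (j + n) * b ^ j = Complex.I ^ n * w *
        ((-1 : ℂ) ^ j * ((r : ℂ) / 2) ^ (2 * j + n)) := by
      calc a ^ (j + n) * b ^ j = a ^ n * (a * b) ^ j := by ring
        _ = _ := by
            rw [hab, han]
            have h4 : (-(((r : ℂ) / 2) ^ 2)) ^ j = (-1 : ℂ) ^ j * ((r : ℂ) / 2) ^ (2 * j) := by
              rw [neg_pow, ← pow_mul]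
            rw [h4, pow_add ((r : ℂ) / 2) (2 * j) n]
            ring
    push_cast
    rw [div_mul_div_comm, key]
    ring
  · ring

private lemma fiber_hasSum (r θ' : ℝ) (n : ℕ) :
    HasSum (fun j : ℕ =>
      (Complex.I * r / 2 * Complex.exp (Complex.I * θ')) ^ (j + n) / (Nat.factorial (j + n)) *
      ((Complex.I * r / 2 * Complex.exp (-(Complex.I * θ'))) ^ j / (Nat.factorial j)))
      (Complex.I ^ n * (besselJ n r : ℂ) * Complex.exp (Complex.I * n * θ')) := by
  apply fiber_hasSum'
  · have h1 : Complex.exp (Complex.I * θ') * Complex.exp (-(Complex.I * θ')) = 1 := by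
      rw [← Complex.exp_add, add_neg_cancel, Complex.exp_zero]
    calc Complex.I * r / 2 * Complex.exp (Complex.I * θ') *
          (Complex.I * r / 2 * Complex.exp (-(Complex.I * θ')))
        = Complex.exp (Complex.I * θ') * Complex.exp (-(Complex.I * θ')) *
            (Complex.I * Complex.I) * ((r : ℂ) / 2) ^ 2 := by ring
      _ = -(((r : ℂ) / 2) ^ 2) := by rw [h1, Complex.I_mul_I]; ring
  · rw [show Complex.I * (r : ℂ) / 2 * Complex.exp (Complex.I * θ')
      = Complex.I * ((r : ℂ) / 2) * Complex.exp (Complex.I * θ') from by ring,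
      mul_pow, mul_pow, ← Complex.exp_nat_mul,
      show (n : ℂ) * (Complex.I * θ') = Complex.I * n * θ' from by ring]

private def jaEquiv : (Σ _ : ℤ, ℕ) ≃ ℕ × ℕ where
  toFun x := (x.2 + x.1.toNat, x.2 + (-x.1).toNat)
  invFun p := ⟨(p.1 : ℤ) - (p.2 : ℤ), min p.1 p.2⟩
  left_inv := by
    rintro ⟨d, j⟩
    have h1 : ((j + d.toNat : ℕ) : ℤ) - ((j + (-d).toNat : ℕ) : ℤ) = d := by push_cast; omega
    have h2 : min (j + d.toNat) (j + (-d).toNat) = j := by omega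
    exact Sigma.ext h1 (heq_of_eq h2)
  right_inv := by
    rintro ⟨m, k⟩
    have h1 : min m k + ((m : ℤ) - k).toNat = m := by omega
    have h2 : min m k + (-((m : ℤ) - k)).toNat = k := by omega
    exact Prod.ext h1 h2

set_option maxHeartbeats 1000000 in
/-- Jacobi–Anger expansion: `e^{i r cos θ} = J₀(r) + 2 ∑_{s=1}^∞ iˢ J_s(r) cos (s θ)`. -/
theorem stmt_2 (r : ℝ) (hr : 0 ≤ r) (θ : ℝ) :
    HasSum
      (fun s : ℕ => 2 * Complex.I ^ (s + 1) * (besselJ (s + 1) r : ℂ) *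
        (Real.cos (((s : ℝ) + 1) * θ) : ℂ))
      (Complex.exp (Complex.I * r * Real.cos θ) - (besselJ 0 r : ℂ)) := by
  obtain ⟨a, ha⟩ : ∃ x : ℂ, x = Complex.I * r / 2 * Complex.exp (Complex.I * θ) := ⟨_, rfl⟩
  obtain ⟨b, hb⟩ : ∃ x : ℂ, x = Complex.I * r / 2 * Complex.exp (-(Complex.I * θ)) := ⟨_, rfl⟩
  -- exponential series
  have hA : HasSum (fun n : ℕ => a ^ n / (Nat.factorial n : ℂ)) (Complex.exp a) := by
    rw [Complex.exp_eq_exp_ℂ]; exact NormedSpace.expSeries_div_hasSum_exp a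
  have hB : HasSum (fun n : ℕ => b ^ n / (Nat.factorial n : ℂ)) (Complex.exp b) := by
    rw [Complex.exp_eq_exp_ℂ]; exact NormedSpace.expSeries_div_hasSum_exp b
  have hnorm : ∀ c : ℂ, Summable (fun n : ℕ => ‖c ^ n / (Nat.factorial n : ℂ)‖) := by
    intro c
    refine (Real.summable_pow_div_factorial ‖c‖).congr fun n => ?_
    rw [norm_div, norm_pow, Complex.norm_natCast]
  have hprod : HasSum (fun x : ℕ × ℕ =>
      (a ^ x.1 / (Nat.factorial x.1 : ℂ)) * (b ^ x.2 / (Nat.factorial x.2 : ℂ)))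
      (Complex.exp a * Complex.exp b) :=
    HasSum.mul (α := ℂ) (f := fun n : ℕ => a ^ n / (Nat.factorial n : ℂ))
      (g := fun n : ℕ => b ^ n / (Nat.factorial n : ℂ)) hA hB (summable_mul_of_summable_norm (R := ℂ)
      (f := fun n : ℕ => a ^ n / (Nat.factorial n : ℂ))
      (g := fun n : ℕ => b ^ n / (Nat.factorial n : ℂ)) (hnorm a) (hnorm b))
  -- reindex by the sigma type
  have hsig : HasSum (fun x : Σ _ : ℤ, ℕ =>
      (a ^ (x.2 + x.1.toNat) / (Nat.factorial (x.2 + x.1.toNat) : ℂ)) *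
      (b ^ (x.2 + (-x.1).toNat) / (Nat.factorial (x.2 + (-x.1).toNat) : ℂ)))
      (Complex.exp a * Complex.exp b) := jaEquiv.hasSum_iff.mpr hprod
  set g : ℤ → ℂ := fun d =>
    Complex.I ^ d.natAbs * (besselJ d.natAbs r : ℂ) * Complex.exp (Complex.I * d * θ) with hg_def
  have hfib : ∀ d : ℤ, HasSum (fun j : ℕ =>
      (a ^ (j + d.toNat) / (Nat.factorial (j + d.toNat) : ℂ)) *
      (b ^ (j + (-d).toNat) / (Nat.factorial (j + (-d).toNat) : ℂ))) (g d) := by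
    intro d
    rcases le_or_gt 0 d with hd | hd
    · obtain ⟨n, rfl⟩ := Int.eq_ofNat_of_zero_le hd
      have h1 : ((n : ℤ)).toNat = n := rfl
      have h2 : (-(n : ℤ)).toNat = 0 := by omega
      have h3 : ((n : ℤ)).natAbs = n := rfl
      simp only [h1, h2, h3, Nat.add_zero, hg_def]
      have := fiber_hasSum r θ n
      rw [ha, hb]
      convert this using 2 <;> push_cast <;> ring
    · have hnab : d = -(d.natAbs : ℤ) := by omega
      set n := d.natAbs with hn
      have h1 : d.toNat = 0 := by omega
      have h2 : (-d).toNat = n := by omega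
      simp only [h1, h2, Nat.add_zero, hg_def]
      have key := fiber_hasSum r (-θ) n
      have e1 : Complex.I * ((-θ : ℝ) : ℂ) = -(Complex.I * (θ : ℂ)) := by push_cast; ring
      have e2 : -(Complex.I * ((-θ : ℝ) : ℂ)) = Complex.I * (θ : ℂ) := by push_cast; ring
      rw [e1] at key
      simp only [neg_neg] at key
      have e3 : Complex.I * (n : ℂ) * ((-θ : ℝ) : ℂ) = Complex.I * (d : ℂ) * (θ : ℂ) := by
        rw [hnab]; push_cast; ring
    
      rw [e3] at key
      rw [ha, hb]
      exact key.congr_fun fun j => by rw [mul_comm]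
  have hG : HasSum g (Complex.exp a * Complex.exp b) := hsig.sigma hfib
  -- split ℤ into positives and negatives
  have hgsum := hG.summable
  have hposS : Summable (fun s : ℕ => g ((s : ℤ) + 1)) :=
    hgsum.comp_injective (fun x y h => by omega)
  have hnegS : Summable (fun s : ℕ => g (-((s : ℤ) + 1))) :=
    hgsum.comp_injective (fun x y h => by omega)
  have hpos := hposS.hasSum
  have hneg := hnegS.hasSum
  have hcomb : HasSum g ((∑' s : ℕ, g ((s : ℤ) + 1)) + g 0 + (∑' s : ℕ, g (-((s : ℤ) + 1)))) :=
    HasSum.of_add_one_of_neg_add_one hpos hneg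
  have hEq := hG.unique hcomb
  -- identify exp a * exp b and g 0
  have hE : Complex.exp a * Complex.exp b = Complex.exp (Complex.I * r * Real.cos θ) := by
    rw [← Complex.exp_add]
    congr 1
    have := exp_add_exp_neg θ
    rw [ha, hb]
    linear_combination (Complex.I * (r : ℂ) / 2) * this
  have hg0 : g 0 = (besselJ 0 r : ℂ) := by
    simp [hg_def]
  -- final function identity
  have hfun : ∀ s : ℕ, g ((s : ℤ) + 1) + g (-((s : ℤ) + 1)) =
      2 * Complex.I ^ (s + 1) * (besselJ (s + 1) r : ℂ) * (Real.cos (((s : ℝ) + 1) * θ) : ℂ) := by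
    intro s
    have hna : ((s : ℤ) + 1).natAbs = s + 1 := by omega
    have hnb : (-((s : ℤ) + 1)).natAbs = s + 1 := by omega
    have harg1 : Complex.I * (((s : ℤ) + 1 : ℤ) : ℂ) * θ
        = Complex.I * ((((s : ℝ) + 1) * θ : ℝ) : ℂ) := by push_cast; ring
    have harg2 : Complex.I * ((-((s : ℤ) + 1) : ℤ) : ℂ) * θ
        = -(Complex.I * ((((s : ℝ) + 1) * θ : ℝ) : ℂ)) := by push_cast; ring
    simp only [hg_def, hna, hnb, harg1, harg2]
    have := exp_add_exp_neg (((s : ℝ) + 1) * θ)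
    linear_combination (Complex.I ^ (s + 1) * (besselJ (s + 1) r : ℂ)) * this
  have final := hpos.add hneg
  rw [show (fun s : ℕ => g ((s : ℤ) + 1) + g (-((s : ℤ) + 1)))
      = (fun s : ℕ => 2 * Complex.I ^ (s + 1) * (besselJ (s + 1) r : ℂ) *
        (Real.cos (((s : ℝ) + 1) * θ) : ℂ)) from funext hfun] at final
  have hval : (∑' s : ℕ, g ((s : ℤ) + 1)) + (∑' s : ℕ, g (-((s : ℤ) + 1)))
      = Complex.exp (Complex.I * r * Real.cos θ) - (besselJ 0 r : ℂ) := by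
    rw [← hE, ← hg0]
    linear_combination -hEq
  rwa [hval] at final
end

section
/- The indefinite integral of the Bessel function J₀ satisfies: for all t ≥ 0, ∫₀ᵗ J₀(u) du = t J₀(t) + (π t / 2)(J₁(t) H₀(t) − J₀(t) H₁(t)), where H₀ and H₁ are the Struve functions of orders 0 and 1. -/
open Real

lemma fact_half_le_gamma (m : ℕ) : (m.factorial : ℝ) / 2 ≤ Real.Gamma ((m : ℝ) + 3/2) := by
  induction m with
  | zero =>
    have h1 : (1 : ℝ) ≤ Real.sqrt π := by
      rw [show (1:ℝ) = Real.sqrt 1 by simp]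
      exact Real.sqrt_le_sqrt (by linarith [Real.pi_gt_three])
    rw [show ((0:ℕ):ℝ) + 3/2 = 1/2 + 1 by norm_num, Real.Gamma_add_one (by norm_num),
      Real.Gamma_one_half_eq]
    simp only [Nat.factorial_zero, Nat.cast_one]; linarith
  | succ n ih =>
    have h0 : (0:ℝ) < Real.Gamma ((n : ℝ) + 3/2) := Real.Gamma_pos_of_pos (by positivity)
    have : ((n+1 : ℕ) : ℝ) + 3/2 = ((n : ℝ) + 3/2) + 1 := by push_cast; ring
    rw [this, Real.Gamma_add_one (by positivity)]
    have : ((n+1).factorial : ℝ) = (n+1) * n.factorial := by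
      rw [Nat.factorial_succ]; push_cast; ring
    rw [this]
    nlinarith [ih]

lemma gamma_half_pos (m : ℕ) : 0 < Real.Gamma ((m : ℝ) + 3/2) :=
  Real.Gamma_pos_of_pos (by positivity)

lemma term_bound (c : ℕ → ℝ) (k : ℕ) (hc : ∀ m, |c m| ≤ 8 / m.factorial)
    (r y : ℝ) (hr : 1 ≤ r) (hy : |y| ≤ 2 * r) (m : ℕ) :
    ‖c m * ((2*m+k) * (y/2)^(2*m+k-1) * (1/2))‖ ≤ (8 * (2*r)^k) * (2*r^2)^m / m.factorial := by
  have hr0 : (0:ℝ) < r := lt_of_lt_of_le one_pos hr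
  have hy2 : |y/2| ≤ r := by rw [abs_div]; rw [abs_of_pos (by norm_num : (0:ℝ) < 2)]; linarith
  have h1 : |y/2| ^ (2*m+k-1) ≤ r ^ (2*m+k-1) := pow_le_pow_left₀ (abs_nonneg _) hy2 _
  have h2 : r ^ (2*m+k-1) ≤ r ^ (2*m+k) := pow_le_pow_right₀ hr (Nat.sub_le _ _)
  have h3 : ((2*m+k : ℕ) : ℝ) * (1/2) ≤ (m + k : ℕ) := by push_cast; ring_nf; linarith
  have h4 : ((m + k : ℕ) : ℝ) ≤ 2 ^ (m+k) := by
    exact_mod_cast (Nat.lt_two_pow_self (n := m+k)).le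
  have h5 : (2:ℝ) ^ (m+k) * r ^ (2*m+k) = (2*r)^k * (2*r^2)^m := by
    rw [pow_add, mul_pow, mul_pow, show 2*m+k = k + 2*m from by ring, pow_add, pow_mul]; ring
  have hfac : (0:ℝ) < m.factorial := by exact_mod_cast m.factorial_pos
  have hcb := hc m
  have habs : ‖c m * ((2*m+k) * (y/2)^(2*m+k-1) * (1/2))‖
      = |c m| * (((2*m+k : ℕ):ℝ) * (1/2)) * |y/2| ^ (2*m+k-1) := by
    rw [Real.norm_eq_abs, abs_mul, abs_mul, abs_mul, abs_pow]
    push_cast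
    rw [abs_of_nonneg (by positivity : (0:ℝ) ≤ 2*(m:ℝ)+(k:ℝ)),
      abs_of_nonneg (by norm_num : (0:ℝ) ≤ (1:ℝ)/2)]
    ring
  rw [habs]
  have hA : |c m| * (((2*m+k : ℕ):ℝ) * (1/2)) * |y/2| ^ (2*m+k-1)
      ≤ (8 / m.factorial) * (2 ^ (m+k)) * r ^ (2*m+k) := by
    have t1 : |y/2| ^ (2*m+k-1) ≤ r ^ (2*m+k) := le_trans h1 h2
    have : (0:ℝ) ≤ ((2*m+k : ℕ):ℝ) * (1/2) := by positivity
    have h34 : ((2*m+k : ℕ):ℝ) * (1/2) ≤ 2 ^ (m+k) := le_trans h3 h4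
    have := mul_le_mul (mul_le_mul hcb h34 this (by positivity)) t1 (by positivity) (by positivity)
    linarith
  calc |c m| * (((2*m+k : ℕ):ℝ) * (1/2)) * |y/2| ^ (2*m+k-1)
      ≤ (8 / m.factorial) * (2 ^ (m+k)) * r ^ (2*m+k) := hA
    _ = (8 * (2*r)^k) * (2*r^2)^m / m.factorial := by rw [mul_assoc, h5]; ring

lemma val_bound (c : ℕ → ℝ) (k : ℕ) (hc : ∀ m, |c m| ≤ 8 / m.factorial)
    (r y : ℝ) (hr : 1 ≤ r) (hy : |y| ≤ 2 * r) (m : ℕ) :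
    ‖c m * (y/2)^(2*m+k)‖ ≤ (8 * (2*r)^k) * (2*r^2)^m / m.factorial := by
  have hr0 : (0:ℝ) < r := lt_of_lt_of_le one_pos hr
  have hy2 : |y/2| ≤ r := by rw [abs_div]; rw [abs_of_pos (by norm_num : (0:ℝ) < 2)]; linarith
  have h1 : |y/2| ^ (2*m+k) ≤ r ^ (2*m+k) := pow_le_pow_left₀ (abs_nonneg _) hy2 _
  have h5 : (2:ℝ) ^ (m+k) * r ^ (2*m+k) = (2*r)^k * (2*r^2)^m := by
    rw [pow_add, mul_pow, mul_pow, show 2*m+k = k + 2*m from by ring, pow_add, pow_mul]; ring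
  have hfac : (0:ℝ) < m.factorial := by exact_mod_cast m.factorial_pos
  have h6 : (1:ℝ) ≤ 2 ^ (m+k) := one_le_pow₀ (by norm_num)
  rw [Real.norm_eq_abs, abs_mul, abs_pow]
  calc |c m| * |y/2| ^ (2*m+k) ≤ (8 / m.factorial) * (2^(m+k) * r ^ (2*m+k)) := by
        have := mul_le_mul (hc m) h1 (by positivity) (by positivity)
        have h7 : r ^ (2*m+k) ≤ 2^(m+k) * r ^ (2*m+k) :=
          le_mul_of_one_le_left (pow_pos hr0 _).le h6
        have h8 : (0:ℝ) ≤ 8 / m.factorial := by positivity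
        nlinarith
    _ = (8 * (2*r)^k) * (2*r^2)^m / m.factorial := by rw [h5]; ring

lemma key_summable (c : ℕ → ℝ) (k : ℕ) (hc : ∀ m, |c m| ≤ 8 / m.factorial) (t : ℝ) :
    Summable (fun m : ℕ => c m * ((2*m+k) * (t/2)^(2*m+k-1) * (1/2))) := by
  set r : ℝ := (|t| + 2) / 2 with hrdef
  have hr : 1 ≤ r := by have := abs_nonneg t; simp only [hrdef]; linarith
  have hu : Summable (fun m : ℕ => (8 * (2*r)^k) * (2*r^2)^m / m.factorial) := by
    simpa [mul_div_assoc] using (Real.summable_pow_div_factorial (2*r^2)).mul_left (8 * (2*r)^k)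
  exact hu.of_norm_bounded (term_bound c k hc r t hr (by simp [hrdef]; linarith [abs_nonneg t]))

lemma key (c : ℕ → ℝ) (k : ℕ) (hc : ∀ m, |c m| ≤ 8 / m.factorial) (t : ℝ) :
    HasDerivAt (fun x : ℝ => ∑' m : ℕ, c m * (x/2)^(2*m+k))
      (∑' m : ℕ, c m * ((2*m+k) * (t/2)^(2*m+k-1) * (1/2))) t := by
  set R : ℝ := 2 * (|t| + 2) with hRdef
  set r : ℝ := (|t| + 2) / 2 with hrdef
  have hr : 1 ≤ r := by have := abs_nonneg t; simp only [hrdef]; linarith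
  have hr0 : (0:ℝ) < r := lt_of_lt_of_le one_pos hr
  have hu : Summable (fun m : ℕ => (8 * (2*r)^k) * (2*r^2)^m / m.factorial) := by
    simpa [mul_div_assoc] using (Real.summable_pow_div_factorial (2*r^2)).mul_left (8 * (2*r)^k)
  have hball : ∀ y ∈ Metric.ball (0:ℝ) (2*r), |y| ≤ 2 * r := by
    intro y hy
    simpa [Real.dist_eq] using (Metric.mem_ball.mp hy).le
  have hderiv : ∀ (m : ℕ) (y : ℝ), HasDerivAt (fun x : ℝ => c m * (x/2)^(2*m+k))
      (c m * ((2*m+k) * (y/2)^(2*m+k-1) * (1/2))) y := by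
    intro m y
    have h1 : HasDerivAt (fun x : ℝ => x/2) (1/2) y := (hasDerivAt_id y).div_const 2
    have := (h1.pow (2*m+k)).const_mul (c m)
    simpa [mul_assoc] using this
  have htmem : t ∈ Metric.ball (0:ℝ) (2*r) := by
    simp [Real.dist_eq, hrdef]
    linarith [abs_nonneg t, le_abs_self t, neg_abs_le t]
  exact hasDerivAt_tsum_of_isPreconnected hu Metric.isOpen_ball
    (convex_ball (0:ℝ) (2*r)).isPreconnected
    (fun m y _ => hderiv m y)
    (fun m y hy => term_bound c k hc r y hr (hball y hy) m)
    (Metric.mem_ball_self (by positivity))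
    ((hu.of_norm_bounded (val_bound c k hc r 0 hr (by simp; positivity))))
    htmem

open Real intervalIntegral

/-- Struve function of integer order `s`. -/
noncomputable def struveH (s : ℕ) (t : ℝ) : ℝ :=
  ∑' m : ℕ, (-1 : ℝ) ^ m /
      (Real.Gamma ((m : ℝ) + 3 / 2) * Real.Gamma ((m : ℝ) + (s : ℝ) + 3 / 2)) *
    (t / 2) ^ (2 * m + s + 1)

lemma one_le_fact (m : ℕ) : (1:ℝ) ≤ m.factorial := by exact_mod_cast m.factorial_pos

lemma hcJ0 : ∀ m : ℕ, |(-1:ℝ)^m / ((m.factorial : ℝ) * (m.factorial : ℝ))| ≤ 8 / m.factorial := by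
  intro m
  have h1 := one_le_fact m
  rw [abs_div, abs_pow, abs_neg, abs_one, one_pow, abs_of_pos (by nlinarith),
    div_le_div_iff₀ (by nlinarith) (by nlinarith)]
  nlinarith

lemma hcJ1 : ∀ m : ℕ, |(-1:ℝ)^m / ((m.factorial : ℝ) * ((m+1).factorial : ℝ))| ≤ 8 / m.factorial := by
  intro m
  have h1 := one_le_fact m
  have h2 := one_le_fact (m+1)
  rw [abs_div, abs_pow, abs_neg, abs_one, one_pow, abs_of_pos (by nlinarith),
    div_le_div_iff₀ (by nlinarith) (by nlinarith)]
  nlinarith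

lemma hcJ1' : ∀ m : ℕ, |2 * ((-1:ℝ)^m / ((m.factorial : ℝ) * ((m+1).factorial : ℝ)))| ≤ 8 / m.factorial := by
  intro m
  have h1 := one_le_fact m
  have h2 := one_le_fact (m+1)
  rw [abs_mul, abs_of_pos (by norm_num : (0:ℝ) < 2), abs_div, abs_pow, abs_neg, abs_one, one_pow,
    abs_of_pos (by nlinarith)]
  rw [mul_div_assoc', div_le_div_iff₀ (by nlinarith) (by nlinarith)]
  nlinarith

lemma hcH0 : ∀ m : ℕ, |(-1:ℝ)^m / (Real.Gamma ((m:ℝ) + 3/2) * Real.Gamma ((m:ℝ) + 3/2))| ≤ 8 / m.factorial := by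
  intro m
  have h1 := one_le_fact m
  have h2 := fact_half_le_gamma m
  have h3 := gamma_half_pos m
  rw [abs_div, abs_pow, abs_neg, abs_one, one_pow, abs_of_pos (by nlinarith),
    div_le_div_iff₀ (by nlinarith) (by nlinarith)]
  nlinarith

lemma gamma_succ_half (m : ℕ) :
    Real.Gamma ((m:ℝ) + 1 + 3/2) = ((m:ℝ) + 3/2) * Real.Gamma ((m:ℝ) + 3/2) := by
  rw [show (m:ℝ) + 1 + 3/2 = ((m:ℝ) + 3/2) + 1 by ring, Real.Gamma_add_one (by positivity)]

lemma fact_half_le_gamma' (m : ℕ) : ((m+1).factorial : ℝ) / 2 ≤ Real.Gamma ((m : ℝ) + 1 + 3/2) := by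
  have := fact_half_le_gamma (m+1)
  rwa [show (((m+1:ℕ)):ℝ) = (m:ℝ) + 1 by push_cast; ring] at this

lemma gamma_half_pos' (m : ℕ) : 0 < Real.Gamma ((m : ℝ) + 1 + 3/2) :=
  Real.Gamma_pos_of_pos (by positivity)

lemma hcH1 : ∀ m : ℕ, |2 * ((-1:ℝ)^m / (Real.Gamma ((m:ℝ) + 3/2) * Real.Gamma ((m:ℝ) + 1 + 3/2)))| ≤ 8 / m.factorial := by
  intro m
  have h1 := one_le_fact m
  have h1' := one_le_fact (m+1)
  have h2 := fact_half_le_gamma m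
  have h2' := fact_half_le_gamma' m
  have h3 := gamma_half_pos m
  have h3' := gamma_half_pos' m
  have hf : ((m+1).factorial : ℝ) = ((m:ℝ)+1) * m.factorial := by
    rw [Nat.factorial_succ]; push_cast; ring
  have hm1 : (1:ℝ) ≤ (m:ℝ) + 1 := by have : (0:ℝ) ≤ m := Nat.cast_nonneg m; linarith
  rw [abs_mul, abs_of_pos (by norm_num : (0:ℝ) < 2), abs_div, abs_pow, abs_neg, abs_one, one_pow,
    abs_of_pos (by nlinarith)]
  rw [mul_div_assoc', div_le_div_iff₀ (by nlinarith) (by nlinarith)]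
  nlinarith [mul_le_mul h2 h2' (by linarith) h3.le]

lemma hasDerivAt_J0 (t : ℝ) : HasDerivAt (besselJ 0) (-besselJ 1 t) t := by
  have h := key (fun m : ℕ => (-1:ℝ)^m / ((m.factorial : ℝ) * (m.factorial : ℝ))) 0 hcJ0 t
  have hfun : besselJ 0 = fun x => ∑' m : ℕ,
      (-1:ℝ)^m / ((m.factorial : ℝ) * (m.factorial : ℝ)) * (x/2)^(2*m+0) := by
    funext x; simp [besselJ]
  rw [hfun]
  convert h using 1
  rw [Summable.tsum_eq_zero_add (key_summable _ 0 hcJ0 t)]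
  simp only [Nat.mul_zero, Nat.add_zero, Nat.cast_zero, zero_mul, mul_zero, zero_add, zero_mul]
  rw [besselJ, ← tsum_neg]
  refine tsum_congr fun m => ?_
  have he : 2*(m+1)-1 = 2*m+1 := by omega
  rw [he]
  have hf : ((m+1).factorial : ℝ) = ((m:ℝ)+1) * m.factorial := by
    rw [Nat.factorial_succ]; push_cast; ring
  have h1 := one_le_fact m
  rw [hf, pow_succ]
  push_cast
  field_simp
  ring

lemma hasDerivAt_tJ1 (t : ℝ) :
    HasDerivAt (fun x => x * besselJ 1 x) (t * besselJ 0 t) t := by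
  have h := key (fun m : ℕ => 2 * ((-1:ℝ)^m / ((m.factorial : ℝ) * ((m+1).factorial : ℝ)))) 2 hcJ1' t
  have hfun : (fun x => x * besselJ 1 x) = fun x => ∑' m : ℕ,
      2 * ((-1:ℝ)^m / ((m.factorial : ℝ) * ((m+1).factorial : ℝ))) * (x/2)^(2*m+2) := by
    funext x
    simp only [besselJ]
    rw [← tsum_mul_left]
    refine tsum_congr fun m => ?_
    rw [show 2*m+2 = (2*m+1)+1 from rfl, pow_succ]
    push_cast [Nat.add_zero]
    ring
  rw [hfun]
  convert h using 1
  have hfun2 : t * besselJ 0 t = ∑' m : ℕ,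
      t * ((-1:ℝ)^m / ((m.factorial : ℝ) * (m.factorial : ℝ)) * (t/2)^(2*m)) := by
    rw [besselJ, ← tsum_mul_left]
    refine tsum_congr fun m => ?_
    push_cast [Nat.add_zero]
    ring
  rw [hfun2]
  refine tsum_congr fun m => ?_
  have he : 2*m+2-1 = 2*m+1 := by omega
  rw [he, show 2*m+1 = (2*m)+1 from rfl, pow_succ]
  have hf : ((m+1).factorial : ℝ) = ((m:ℝ)+1) * m.factorial := by
    rw [Nat.factorial_succ]; push_cast; ring
  have h1 := one_le_fact m
  rw [hf]
  push_cast
  field_simp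

lemma hasDerivAt_H0 (t : ℝ) : HasDerivAt (struveH 0) (2/π - struveH 1 t) t := by
  have h := key (fun m : ℕ => (-1:ℝ)^m / (Real.Gamma ((m:ℝ) + 3/2) * Real.Gamma ((m:ℝ) + 3/2))) 1 hcH0 t
  have hfun : struveH 0 = fun x => ∑' m : ℕ,
      (-1:ℝ)^m / (Real.Gamma ((m:ℝ) + 3/2) * Real.Gamma ((m:ℝ) + 3/2)) * (x/2)^(2*m+1) := by
    funext x; simp [struveH]
  rw [hfun]
  convert h using 1
  rw [Summable.tsum_eq_zero_add (key_summable _ 1 hcH0 t)]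
  have hg32 : Real.Gamma (((0:ℕ):ℝ) + 3/2) = Real.sqrt π / 2 := by
    rw [show ((0:ℕ):ℝ) + 3/2 = 1/2 + 1 by norm_num, Real.Gamma_add_one (by norm_num),
      Real.Gamma_one_half_eq]
    ring
  have hterm0 : (-1:ℝ)^(0:ℕ) / (Real.Gamma (((0:ℕ):ℝ) + 3/2) * Real.Gamma (((0:ℕ):ℝ) + 3/2)) *
      ((2*((0:ℕ):ℝ)+((1:ℕ):ℝ)) * (t/2)^(2*0+1-1) * (1/2)) = 2/π := by
    rw [hg32]
    have h4 : Real.sqrt π / 2 * (Real.sqrt π / 2) = π / 4 := by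
      rw [div_mul_div_comm, Real.mul_self_sqrt Real.pi_pos.le]; norm_num
    rw [h4]
    norm_num
    ring
  rw [hterm0, struveH, sub_eq_add_neg, ← tsum_neg]
  congr 1
  refine tsum_congr fun m => ?_
  have he : 2*(m+1)+1-1 = 2*m+2 := by omega
  rw [he]
  have hΓ := gamma_succ_half m
  have hG := gamma_half_pos m
  have hG' := gamma_half_pos' m
  have hcast : (((m+1:ℕ)):ℝ) = (m:ℝ) + 1 := by push_cast; ring
  rw [show 2*m+1+1 = 2*m+2 from rfl]
  push_cast [hcast]
  rw [hΓ, pow_succ]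
  have hm32 : (0:ℝ) < (m:ℝ) + 3/2 := by positivity
  field_simp
  ring

lemma hasDerivAt_tH1 (t : ℝ) :
    HasDerivAt (fun x => x * struveH 1 x) (t * struveH 0 t) t := by
  have h := key (fun m : ℕ => 2 * ((-1:ℝ)^m / (Real.Gamma ((m:ℝ) + 3/2) * Real.Gamma ((m:ℝ) + 1 + 3/2)))) 3 hcH1 t
  have hfun : (fun x => x * struveH 1 x) = fun x => ∑' m : ℕ,
      2 * ((-1:ℝ)^m / (Real.Gamma ((m:ℝ) + 3/2) * Real.Gamma ((m:ℝ) + 1 + 3/2))) * (x/2)^(2*m+3) := by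
    funext x
    simp only [struveH, Nat.cast_one]
    rw [← tsum_mul_left]
    refine tsum_congr fun m => ?_
    rw [show 2*m+3 = (2*m+1+1)+1 from rfl, pow_succ]
    ring
  rw [hfun]
  convert h using 1
  have hfun2 : t * struveH 0 t = ∑' m : ℕ,
      t * ((-1:ℝ)^m / (Real.Gamma ((m:ℝ) + 3/2) * Real.Gamma ((m:ℝ) + 3/2)) * (t/2)^(2*m+1)) := by
    rw [struveH, ← tsum_mul_left]
    refine tsum_congr fun m => ?_
    push_cast [Nat.add_zero]
    ring
  rw [hfun2]
  refine tsum_congr fun m => ?_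
  have he : 2*m+3-1 = 2*m+2 := by omega
  rw [he, show 2*m+2 = (2*m+1)+1 from rfl, pow_succ]
  have hΓ := gamma_succ_half m
  have hG := gamma_half_pos m
  have hm32 : (0:ℝ) < (m:ℝ) + 3/2 := by positivity
  rw [hΓ]
  push_cast
  field_simp
  ring

lemma cont_J0 : Continuous (besselJ 0) :=
  continuous_iff_continuousAt.mpr fun x => (hasDerivAt_J0 x).continuousAt

theorem stmt_4 (t : ℝ) (ht : 0 ≤ t) :
    ∫ u in (0 : ℝ)..t, besselJ 0 u =
      t * besselJ 0 t +
        (π * t / 2) * (besselJ 1 t * struveH 0 t - besselJ 0 t * struveH 1 t) := by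
  have hF : ∀ x : ℝ, HasDerivAt (fun x : ℝ => x * besselJ 0 x +
      (π/2) * ((x * besselJ 1 x) * struveH 0 x - besselJ 0 x * (x * struveH 1 x)))
      (besselJ 0 x) x := by
    intro x
    have h1 := (hasDerivAt_id x).mul (hasDerivAt_J0 x)
    have h2 := ((hasDerivAt_tJ1 x).mul (hasDerivAt_H0 x)).sub
      ((hasDerivAt_J0 x).mul (hasDerivAt_tH1 x))
    have h3 := h1.add (h2.const_mul (π/2))
    refine h3.congr_deriv ?_
    have hπ := Real.pi_ne_zero
    simp only [id_eq]
    field_simp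
    ring
  have hint := intervalIntegral.integral_eq_sub_of_hasDerivAt (fun x _ => hF x)
    (cont_J0.intervalIntegrable 0 t)
  rw [hint]
  ring
end
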